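/- Let X be an n×m matrix of strictly positive evaluations (n ≥ 1 alternatives, m ≥ 1 criteria) and let v ≥ 2 be an integer. Form the expanded (n+v)×m evaluation matrix by appending the virtual alternatives â_{1,v}, …, â_{v,v}, and apply the entropy-weight TODIM method to it: normalize each column by its maximum, compute entropy weights w_j = (1 − ê_j)/Σ_{j'} (1 − ê_{j'}) with ê_j = (Σ_i x̄^j_i ln x̄^j_i)/ln(n+v), and compute scores ŝ_i = Σ_k Σ_j d_j(x̄^j_i, x̄^j_k) with d_j(s,t) = (w_j·(s−t))^{0.88} if s > t, 0 if s = t, −2.25·w_j·(t−s)^{0.88} if s < t. Then the bottom virtual alternative â_{1,v} attains the minimal score: ŝ(â_{1,v}) ≤ ŝ(a) for every alternative a of the expanded set. -/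

import Mathlib

/-!
On every criterion the bottom virtual alternative `â_{1,v}` takes the column minimum, so its
normalized evaluations are the smallest ones. The evaluations are nonnegative, so the
normalized ones lie in `[0, 1]`, every entropy `ê_j` is nonpositive and every weight `w_j`
is nonnegative. With a nonnegative weight the dominance degree `d_j(s, t)` is monotone in
`s`, so `ŝ_i` is monotone in the normalized evaluations of `i`, term by term.
-/

open Set

structure IsTodimDominance (w α θ : ℝ) (D : ℝ → ℝ → ℝ) : Prop where
  of_gt : ∀ s t, t < s → D s t = (w * (s - t)) ^ α
  of_eq : ∀ s t, s = t → D s t = 0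
  of_lt : ∀ s t, s < t → D s t = -θ * w * (t - s) ^ α

namespace IsTodimDominance

variable {w α θ : ℝ} {D : ℝ → ℝ → ℝ}

theorem nonpos_of_le (hD : IsTodimDominance w α θ D) (hw : 0 ≤ w) (hθ : 0 ≤ θ) {s t : ℝ}
    (h : s ≤ t) : D s t ≤ 0 := by
  rcases h.lt_or_eq with hlt | heq
  · rw [hD.of_lt s t hlt, neg_mul, neg_mul]
    exact neg_nonpos.2 (by positivity)
  · exact (hD.of_eq s t heq).le

theorem nonneg_of_le (hD : IsTodimDominance w α θ D) (hw : 0 ≤ w) {s t : ℝ} (h : t ≤ s) :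
    0 ≤ D s t := by
  rcases h.lt_or_eq with hlt | heq
  · rw [hD.of_gt s t hlt]
    exact Real.rpow_nonneg (mul_nonneg hw (sub_nonneg.2 h)) α
  · exact (hD.of_eq s t heq.symm).ge

theorem monotone_left (hD : IsTodimDominance w α θ D) (hw : 0 ≤ w) (hα : 0 ≤ α)
    (hθ : 0 ≤ θ) (t : ℝ) : Monotone (D · t) := by
  intro s s' hss'
  show D s t ≤ D s' t
  rcases le_total s' t with hs't | hts'
  · rcases hs't.lt_or_eq with hlt | rfl
    · simp only [hD.of_lt s t (hss'.trans_lt hlt), hD.of_lt s' t hlt, neg_mul]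
      gcongr
    · exact (hD.nonpos_of_le hw hθ hss').trans (hD.nonneg_of_le hw le_rfl)
  · rcases le_total s t with hst | hts
    · exact (hD.nonpos_of_le hw hθ hst).trans (hD.nonneg_of_le hw hts')
    · rcases hts.lt_or_eq with hlt | rfl
      · simp only [hD.of_gt s t hlt, hD.of_gt s' t (hlt.trans_le hss')]
        gcongr
      · exact (hD.nonpos_of_le hw hθ le_rfl).trans (hD.nonneg_of_le hw hts')

end IsTodimDominance

theorem entropy_nonpos {ι : Type*} [Fintype ι] {x : ι → ℝ} (hx : ∀ i, x i ∈ Icc 0 1)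
    (N : ℕ) : (∑ i, x i * Real.log (x i)) / Real.log N ≤ 0 :=
  div_nonpos_of_nonpos_of_nonneg
    (Finset.sum_nonpos fun i _ => Real.mul_log_nonpos (hx i).1 (hx i).2)
    (Real.log_natCast_nonneg N)

theorem entropy_weight_nonneg {ι : Type*} [Fintype ι] {e : ι → ℝ} (he : ∀ j, e j ≤ 1)
    (j : ι) : 0 ≤ (1 - e j) / ∑ j', (1 - e j') :=
  div_nonneg (sub_nonneg.2 (he j)) (Finset.sum_nonneg fun j' _ => sub_nonneg.2 (he j'))

theorem div_mem_Icc_of_isGreatest {ι : Type*} {f : ι → ℝ} {M : ℝ} (hf : ∀ i, 0 ≤ f i)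
    (hM : IsGreatest (range f) M) (i : ι) : f i / M ∈ Icc 0 1 := by
  obtain ⟨i₀, hi₀⟩ := hM.1
  have hM_nonneg : 0 ≤ M := hi₀ ▸ hf i₀
  exact ⟨div_nonneg (hf i) hM_nonneg, div_le_one_of_le₀ (hM.2 ⟨i, rfl⟩) hM_nonneg⟩

theorem le_expanded_of_isLeast {n v : ℕ} {X : Fin n → ℝ} {Y : Fin (n + v) → ℝ} {lo hi : ℝ}
    (hlo : IsLeast (range X) lo) (hhi : IsGreatest (range X) hi)
    (hY_orig : ∀ i, Y (Fin.castAdd v i) = X i)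
    (hY_virt : ∀ d : Fin v, Y (Fin.natAdd n d) = lo + ((d : ℝ) / ((v : ℝ) - 1)) * (hi - lo))
    (i : Fin (n + v)) : lo ≤ Y i := by
  induction i using Fin.addCases with
  | left i => exact hY_orig i ▸ hlo.2 ⟨i, rfl⟩
  | right d =>
    have hv : (0 : ℝ) ≤ (v : ℝ) - 1 := sub_nonneg.2 (Nat.one_le_cast.2 d.pos)
    have hlo_le_hi : lo ≤ hi := hlo.2 hhi.1
    rw [hY_virt d]
    exact le_add_of_nonneg_right
      (mul_nonneg (div_nonneg d.val.cast_nonneg hv) (sub_nonneg.2 hlo_le_hi))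

/-- Let `X` be an `n × m` matrix of strictly positive evaluations
(`n ≥ 1`, `m ≥ 1`) and `v ≥ 2`. Form the expanded `(n+v) × m` matrix `Y` by appending
the virtual alternatives (the virtual index `d : Fin v` encodes position `d+1`, with
evaluation `xmin j + ((d-1)/(v-1)) * (xmax j - xmin j)` on criterion `j`), and apply the
entropy-weight TODIM method to `Y`: normalize each column by its maximum, compute entropy
weights `w_j = (1 - ê_j)/∑ j', (1 - ê_{j'})` with
`ê_j = (∑ i, x̄^j_i ln x̄^j_i)/ln(n+v)`, and compute scores
`ŝ_i = ∑ k, ∑ j, d_j(x̄^j_i, x̄^j_k)` with `d_j(s,t) = (w_j*(s-t))^0.88` if `s > t`,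
`0` if `s = t`, `-2.25*w_j*(t-s)^0.88` if `s < t`. Then the bottom virtual alternative
`â_{1,v}` attains the minimal score. -/
theorem bottom_virtual_alternative_minimal_score
    (n m v : ℕ) (hv : 2 ≤ v)
    (X : Fin n → Fin m → ℝ) (hXpos : ∀ i j, 0 < X i j)
    (xmax xmin : Fin m → ℝ)
    (hmax : ∀ j, IsGreatest (Set.range fun i => X i j) (xmax j))
    (hmin : ∀ j, IsLeast (Set.range fun i => X i j) (xmin j))
    (Y : Fin (n + v) → Fin m → ℝ)
    (hYorig : ∀ (i : Fin n) (j : Fin m), Y (Fin.castAdd v i) j = X i j)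
    (hYvirt : ∀ (d : Fin v) (j : Fin m),
      Y (Fin.natAdd n d) j = xmin j + ((d : ℝ) / ((v : ℝ) - 1)) * (xmax j - xmin j))
    (ymax : Fin m → ℝ)
    (hymax : ∀ j, IsGreatest (Set.range fun i => Y i j) (ymax j))
    (xbar : Fin (n + v) → Fin m → ℝ)
    (hxbar : ∀ i j, xbar i j = Y i j / ymax j)
    (e : Fin m → ℝ)
    (he : ∀ j, e j =
      (∑ i, xbar i j * Real.log (xbar i j)) / Real.log ((n + v : ℕ) : ℝ))
    (w : Fin m → ℝ)
    (hw : ∀ j, w j = (1 - e j) / ∑ j', (1 - e j'))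
    (d : Fin m → ℝ → ℝ → ℝ)
    (hd_gt : ∀ (j : Fin m) (s t : ℝ), t < s → d j s t = (w j * (s - t)) ^ (0.88 : ℝ))
    (hd_eq : ∀ (j : Fin m) (s t : ℝ), s = t → d j s t = 0)
    (hd_lt : ∀ (j : Fin m) (s t : ℝ), s < t →
      d j s t = -2.25 * w j * (t - s) ^ (0.88 : ℝ))
    (score : Fin (n + v) → ℝ)
    (hscore : ∀ i, score i = ∑ k, ∑ j, d j (xbar i j) (xbar k j)) :
    ∀ a : Fin (n + v), score (Fin.natAdd n ⟨0, by omega⟩) ≤ score a := by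
  intro a
  set b : Fin (n + v) := Fin.natAdd n ⟨0, by omega⟩
  have hY_ge : ∀ i j, xmin j ≤ Y i j := fun i j =>
    le_expanded_of_isLeast (Y := (Y · j)) (hmin j) (hmax j) (fun i => hYorig i j)
      (fun d => hYvirt d j) i
  have hYb : ∀ j, Y b j = xmin j := fun j => by simpa using hYvirt ⟨0, by omega⟩ j
  have hxmin_nonneg : ∀ j, 0 ≤ xmin j := fun j => by
    obtain ⟨i, hi⟩ := (hmin j).1
    exact hi ▸ (hXpos i j).le
  have hY_nonneg : ∀ i j, 0 ≤ Y i j := fun i j => (hxmin_nonneg j).trans (hY_ge i j)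
  have hxbar_mem : ∀ i j, xbar i j ∈ Icc 0 1 := fun i j =>
    hxbar i j ▸ div_mem_Icc_of_isGreatest (hY_nonneg · j) (hymax j) i
  have hw_nonneg : ∀ j, 0 ≤ w j := fun j => hw j ▸ entropy_weight_nonneg
    (fun j => (he j ▸ entropy_nonpos (fun i => hxbar_mem i j) (n + v)).trans zero_le_one) j
  have hxbar_b_le : ∀ j, xbar b j ≤ xbar a j := fun j => by
    rw [hxbar, hxbar, hYb]
    exact div_le_div_of_nonneg_right (hY_ge a j)
      ((hY_nonneg a j).trans ((hymax j).2 ⟨a, rfl⟩))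
  rw [hscore, hscore]
  gcongr with k _ j _
  have hd_j : IsTodimDominance (w j) 0.88 2.25 (d j) := ⟨hd_gt j, hd_eq j, hd_lt j⟩
  exact hd_j.monotone_left (hw_nonneg j) (by norm_num) (by norm_num) _ (hxbar_b_le j)
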